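/- arXiv:2212.03794 — 6 statements merged into one kernel-verified Lean document; each statement's English description precedes it below -/
import Mathlib

section
/- Every b ∈ T can be written as a finite nonnegative rational combination of pure vectors: there exist N ∈ ℕ, nonnegative rationals c_1, …, c_N, and pairs of integers k_m < ℓ_m (for 1 ≤ m ≤ N) with each k_m and ℓ_m lying in the support of b, such that b = Σ_{m=1}^N c_m · e_{k_m,ℓ_m}. In particular, the cone T is contained in the cone generated by the pure vectors. -/
/-- The pure vector `e_{k,ℓ} ∈ 𝔹`: the finitely supported function `ℤ → ℚ`
equal to `1` at `k` and at `ℓ` and `0` elsewhere (for `k < ℓ`). -/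
noncomputable def pureVec (k ℓ : ℤ) : ℤ →₀ ℚ :=
  Finsupp.single k 1 + Finsupp.single ℓ 1

/-- The linear functional `τ_j(b) = −b(j) + Σ_{i ≠ j} b(i) = (Σ_i b(i)) − 2 b(j)`. -/
def tau (b : ℤ →₀ ℚ) (j : ℤ) : ℚ :=
  (b.sum fun _ v => v) - 2 * b j

/-- Membership in the cone `T = {b : σ_j(b) ≥ 0 and τ_j(b) ≥ 0 for all j}`. -/
def memT (b : ℤ →₀ ℚ) : Prop :=
  ∀ j : ℤ, 0 ≤ b j ∧ 0 ≤ tau b j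

/-!
Write `S = ∑ b` and `τ_j = S - 2 b(j)`. If some `j` in the support is tight (`τ_j = 0`), then `b(j)`
equals the sum of the other entries and `b = ∑_{i ≠ j} b(i) e_{i,j}`. In general pick two support
points `k ≠ ℓ` and subtract `c e_{k,ℓ}` with `c` as large as `T` allows: `c` is the least of
`b(k)`, `b(ℓ)` and `τ_j / 2` for the other support points `j`. Subtracting lowers every `τ_j` with
`j ∉ {k, ℓ}` by `2c` and keeps `τ_k`, `τ_ℓ`, so the remainder stays in `T`, and whichever bound is
attained either removes `k` or `ℓ` from the support or makes some `j` tight. Induct on the size of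
the support.
-/

open Finsupp

variable {b : ℤ →₀ ℚ} {c : ℚ} {j k ℓ : ℤ}

noncomputable abbrev pureCone (s : Finset ℤ) : PointedCone ℚ (ℤ →₀ ℚ) :=
  PointedCone.hull ℚ {v | ∃ k ∈ s, ∃ ℓ ∈ s, k < ℓ ∧ pureVec k ℓ = v}

lemma pureVec_comm (k ℓ : ℤ) : pureVec k ℓ = pureVec ℓ k := add_comm _ _

lemma pureVec_mem_pureCone {s : Finset ℤ} (hk : k ∈ s) (hℓ : ℓ ∈ s) (hkℓ : k ≠ ℓ) :
    pureVec k ℓ ∈ pureCone s := by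
  rcases hkℓ.lt_or_gt with h | h
  · exact PointedCone.subset_hull ⟨k, hk, ℓ, hℓ, h, rfl⟩
  · exact PointedCone.subset_hull ⟨ℓ, hℓ, k, hk, h, pureVec_comm ℓ k⟩

lemma pureCone_mono {s t : Finset ℤ} (h : s ⊆ t) : pureCone s ≤ pureCone t :=
  Submodule.span_mono fun _ ⟨k, hk, ℓ, hℓ, hkℓ, hv⟩ => ⟨k, h hk, ℓ, h hℓ, hkℓ, hv⟩

lemma pureVec_apply_left (hkℓ : k ≠ ℓ) : pureVec k ℓ k = 1 := by
  simp [pureVec, hkℓ.symm]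

lemma pureVec_apply_right (hkℓ : k ≠ ℓ) : pureVec k ℓ ℓ = 1 := by
  simp [pureVec, hkℓ]

lemma pureVec_apply_of_ne (hk : j ≠ k) (hℓ : j ≠ ℓ) : pureVec k ℓ j = 0 := by
  simp [pureVec, hk.symm, hℓ.symm]

lemma degree_smul_pureVec (c : ℚ) (k ℓ : ℤ) : (c • pureVec k ℓ).degree = 2 * c := by
  simp only [pureVec, smul_add, smul_single, smul_eq_mul, mul_one, map_add, degree_single]
  ring

lemma tau_eq_degree_sub (b : ℤ →₀ ℚ) (j : ℤ) : tau b j = b.degree - 2 * b j := rfl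

lemma tau_sub_smul_pureVec (b : ℤ →₀ ℚ) (c : ℚ) (k ℓ j : ℤ) :
    tau (b - c • pureVec k ℓ) j = tau b j - 2 * c + 2 * c * pureVec k ℓ j := by
  simp only [tau_eq_degree_sub, map_sub, degree_smul_pureVec, coe_sub, coe_smul, Pi.sub_apply,
    Pi.smul_apply, smul_eq_mul]
  ring

lemma support_sub_smul_pureVec_subset (hk : k ∈ b.support) (hℓ : ℓ ∈ b.support) :
    (b - c • pureVec k ℓ).support ⊆ b.support := by
  intro j hj
  by_cases hjk : j = k
  · exact hjk ▸ hk
  by_cases hjℓ : j = ℓ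
  · exact hjℓ ▸ hℓ
  simpa [pureVec_apply_of_ne hjk hjℓ] using hj

/-- Off the support, `τ_j` is the total mass. -/
lemma memT_of_tau_nonneg_on_support (hb : ∀ j, 0 ≤ b j)
    (hτ : ∀ j ∈ b.support, 0 ≤ tau b j) : memT b := by
  refine fun j => ⟨hb j, ?_⟩
  by_cases hj : j ∈ b.support
  · exact hτ j hj
  · rw [tau_eq_degree_sub, notMem_support_iff.mp hj, mul_zero, sub_zero]
    exact Finset.sum_nonneg fun i _ => hb i

lemma memT_sub_smul_pureVec (hb : memT b) (hkℓ : k ≠ ℓ) (hck : c ≤ b k) (hcℓ : c ≤ b ℓ)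
    (hcτ : ∀ j ∈ b.support, j ≠ k → j ≠ ℓ → 2 * c ≤ tau b j) :
    memT (b - c • pureVec k ℓ) := by
  have hvalue (j) : (b - c • pureVec k ℓ) j = b j - c * pureVec k ℓ j := rfl
  refine memT_of_tau_nonneg_on_support (fun j => ?_) (fun j hj => ?_)
  · rw [hvalue]
    by_cases hjk : j = k
    · subst hjk; rw [pureVec_apply_left hkℓ]; linarith
    by_cases hjℓ : j = ℓ
    · subst hjℓ; rw [pureVec_apply_right hkℓ]; linarith
    rw [pureVec_apply_of_ne hjk hjℓ]; linarith [(hb j).1]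
  · rw [tau_sub_smul_pureVec]
    by_cases hjk : j = k
    · subst hjk; rw [pureVec_apply_left hkℓ]; linarith [(hb j).2]
    by_cases hjℓ : j = ℓ
    · subst hjℓ; rw [pureVec_apply_right hkℓ]; linarith [(hb j).2]
    have hjb : j ∈ b.support := by
      simpa [hvalue, pureVec_apply_of_ne hjk hjℓ] using hj
    rw [pureVec_apply_of_ne hjk hjℓ]; linarith [hcτ j hjb hjk hjℓ]

lemma one_lt_card_support (hb : memT b) (hb0 : b ≠ 0) : 1 < b.support.card := by
  by_contra! hcard
  obtain ⟨k, hk⟩ := Finset.card_le_one_iff_subset_singleton.mp hcard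
  have hsingle : b = single k (b k) := support_subset_singleton.mp hk
  have hτ := (hb k).2
  rw [tau_eq_degree_sub, hsingle, degree_single, single_eq_same] at hτ
  have hbk : b k = 0 := by linarith [(hb k).1]
  exact hb0 (by rw [hsingle, hbk, single_zero])

lemma mem_pureCone_of_tau_eq_zero (hb : ∀ i, 0 ≤ b i) (hj : j ∈ b.support)
    (htight : tau b j = 0) : b ∈ pureCone b.support := by
  have hrest : ∑ i ∈ b.support.erase j, b i = b j := by
    have := Finset.add_sum_erase b.support b hj
    rw [tau_eq_degree_sub, degree_apply] at htight
    linarith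
  have hdecomp : ∑ i ∈ b.support.erase j, b i • pureVec i j = b := by
    simp only [pureVec, smul_add, Finset.sum_add_distrib, smul_single, smul_eq_mul, mul_one]
    rw [← single_finsetSum, hrest, Finset.sum_erase_add _ _ hj]
    exact sum_single b
  have hmem : ∑ i ∈ b.support.erase j, b i • pureVec i j ∈ pureCone b.support :=
    Submodule.sum_mem _ fun i hi => PointedCone.smul_mem _ (hb i)
      (pureVec_mem_pureCone (Finset.mem_of_mem_erase hi) hj (Finset.ne_of_mem_erase hi))
  rwa [hdecomp] at hmem

lemma exists_smul_pureVec_reduction (hb : memT b) (hk : k ∈ b.support) (hℓ : ℓ ∈ b.support)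
    (hkℓ : k ≠ ℓ) :
    ∃ c : ℚ, 0 ≤ c ∧ memT (b - c • pureVec k ℓ) ∧
      ((b - c • pureVec k ℓ).support.card < b.support.card ∨
        ∃ j ∈ (b - c • pureVec k ℓ).support, tau (b - c • pureVec k ℓ) j = 0) := by
  let bound (j : ℤ) : ℚ := if j = k ∨ j = ℓ then b j else tau b j / 2
  obtain ⟨j₀, hj₀, hmin⟩ := b.support.exists_min_image bound ⟨k, hk⟩
  have hck : bound j₀ ≤ b k := by simpa [bound] using hmin k hk
  have hcℓ : bound j₀ ≤ b ℓ := by simpa [bound] using hmin ℓ hℓ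
  have hcτ (j) (hj : j ∈ b.support) (hjk : j ≠ k) (hjℓ : j ≠ ℓ) : 2 * bound j₀ ≤ tau b j := by
    have := hmin j hj
    simp only [bound, hjk, hjℓ, or_self, if_false] at this
    linarith
  have hc : 0 ≤ bound j₀ := by
    simp only [bound]
    split_ifs
    · exact (hb j₀).1
    · linarith [(hb j₀).2]
  refine ⟨bound j₀, hc, memT_sub_smul_pureVec hb hkℓ hck hcℓ hcτ, ?_⟩
  have hsub := support_sub_smul_pureVec_subset (c := bound j₀) hk hℓ
  by_cases hj₀kℓ : j₀ = k ∨ j₀ = ℓ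
  · refine Or.inl (Finset.card_lt_card ⟨hsub, fun hsup => ?_⟩)
    have hvanish : (b - bound j₀ • pureVec k ℓ) j₀ = 0 := by
      rcases hj₀kℓ with rfl | rfl
      · simp [bound, pureVec_apply_left hkℓ]
      · simp [bound, pureVec_apply_right hkℓ]
    exact (mem_support_iff.mp (hsup hj₀)) hvanish
  · push Not at hj₀kℓ
    have hvalue : (b - bound j₀ • pureVec k ℓ) j₀ = b j₀ := by
      simp [pureVec_apply_of_ne hj₀kℓ.1 hj₀kℓ.2]
    refine Or.inr ⟨j₀, by rwa [mem_support_iff, hvalue, ← mem_support_iff], ?_⟩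
    rw [tau_sub_smul_pureVec, pureVec_apply_of_ne hj₀kℓ.1 hj₀kℓ.2]
    simp only [bound, hj₀kℓ.1, hj₀kℓ.2, or_self, if_false]
    ring

theorem mem_pureCone_support_of_memT (b : ℤ →₀ ℚ) (hb : memT b) : b ∈ pureCone b.support := by
  induction hn : b.support.card using Nat.strong_induction_on generalizing b with
  | _ n ih =>
  rcases eq_or_ne b 0 with rfl | hb0
  · exact zero_mem _
  obtain ⟨k, hk, ℓ, hℓ, hkℓ⟩ := Finset.one_lt_card.mp (one_lt_card_support hb hb0)
  obtain ⟨c, hc, hb', hprogress⟩ := exists_smul_pureVec_reduction hb hk hℓ hkℓ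
  have hrest : b - c • pureVec k ℓ ∈ pureCone (b - c • pureVec k ℓ).support := by
    rcases hprogress with hcard | ⟨j, hj, htight⟩
    · exact ih _ (hn ▸ hcard) _ hb' rfl
    · exact mem_pureCone_of_tau_eq_zero (fun i => (hb' i).1) hj htight
  have hsum : b - c • pureVec k ℓ + c • pureVec k ℓ ∈ pureCone b.support :=
    add_mem (pureCone_mono (support_sub_smul_pureVec_subset hk hℓ) hrest)
      (PointedCone.smul_mem _ hc (pureVec_mem_pureCone hk hℓ hkℓ))
  rwa [sub_add_cancel] at hsum

/-- Every `b ∈ T` is a finite nonnegative rational combination of pure vectors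
`e_{k_m, ℓ_m}` with `k_m < ℓ_m` and `k_m, ℓ_m` in the support of `b`. -/
theorem T_subset_pure_cone (b : ℤ →₀ ℚ) (hb : memT b) :
    ∃ (N : ℕ) (c : Fin N → ℚ) (k ℓ : Fin N → ℤ),
      (∀ m, 0 ≤ c m) ∧ (∀ m, k m < ℓ m) ∧
      (∀ m, k m ∈ b.support ∧ ℓ m ∈ b.support) ∧
      b = ∑ m, c m • pureVec (k m) (ℓ m) := by
  obtain ⟨N, c, v, hv⟩ := Submodule.mem_span_set'.mp (mem_pureCone_support_of_memT b hb)
  choose k hk ℓ hℓ hkℓ hpure using fun m => (v m).2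
  refine ⟨N, fun m => c m, k, ℓ, fun m => (c m).2, hkℓ, fun m => ⟨hk m, hℓ m⟩, ?_⟩
  rw [← hv]
  simp_rw [hpure]
  rfl
end

section
/- Every b ∈ T can be written as a finite nonnegative rational combination of pure vectors whose degree sequences form a chain: there exist N ∈ ℕ, nonnegative rationals c_1, …, c_N, and pairs of integers k_m < ℓ_m (for 1 ≤ m ≤ N) such that b = Σ_{m=1}^N c_m · e_{k_m,ℓ_m} and (k_1,ℓ_1) ≤ (k_2,ℓ_2) ≤ … ≤ (k_N,ℓ_N) in the componentwise partial order. -/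
lemma sumAll_def (b : ℤ →₀ ℚ) : (b.sum fun _ v => v) = ∑ i ∈ b.support, b i := rfl

open Classical in
noncomputable def msr (b : ℤ →₀ ℚ) : ℕ :=
  b.support.card + (if ∃ j, b j ≠ 0 ∧ tau b j = 0 then 0 else 1)

lemma smul_pure_eq (k ℓ : ℤ) (c : ℚ) :
    c • pureVec k ℓ = Finsupp.single k c + Finsupp.single ℓ c := by
  rw [pureVec, smul_add, Finsupp.smul_single', Finsupp.smul_single', mul_one]

lemma sumAll_smul_pure (k ℓ : ℤ) (c : ℚ) :
    ((c • pureVec k ℓ).sum fun _ v => v) = 2 * c := by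
  rw [smul_pure_eq]
  rw [Finsupp.sum_add_index' (fun _ => rfl) (fun _ _ _ => rfl),
    Finsupp.sum_single_index rfl, Finsupp.sum_single_index rfl]
  ring

lemma sumAll_sub (x y : ℤ →₀ ℚ) :
    ((x - y).sum fun _ v => v) = (x.sum fun _ v => v) - (y.sum fun _ v => v) :=
  Finsupp.sum_sub_index (fun a => by simp)

lemma pure_nonneg (k ℓ i : ℤ) : 0 ≤ pureVec k ℓ i := by
  rw [pureVec, Finsupp.add_apply, Finsupp.single_apply, Finsupp.single_apply]
  split_ifs <;> norm_num

lemma sum_fin_orderIso (s : Finset ℤ) (f : ℤ → ℚ) :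
    ∑ m : Fin s.card, f ((s.orderIsoOfFin rfl m : ℤ)) = ∑ x ∈ s, f x := by
  rw [← Finset.sum_coe_sort s f, ← Equiv.sum_comp (s.orderIsoOfFin rfl).toEquiv]
  rfl

lemma sum_fin_orderIso' (s : Finset ℤ) (f : ℤ → (ℤ →₀ ℚ)) :
    ∑ m : Fin s.card, f ((s.orderIsoOfFin rfl m : ℤ)) = ∑ x ∈ s, f x := by
  rw [← Finset.sum_coe_sort s f, ← Equiv.sum_comp (s.orderIsoOfFin rfl).toEquiv]
  rfl

lemma pure_smul (x j : ℤ) (hne : x ≠ j) (q : ℚ) :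
    q • pureVec (min x j) (max x j) = Finsupp.single x q + Finsupp.single j q := by
  have : q • pureVec (min x j) (max x j)
      = Finsupp.single (min x j) q + Finsupp.single (max x j) q := by
    rw [pureVec, smul_add, Finsupp.smul_single', Finsupp.smul_single', mul_one]
  rw [this]
  rcases hne.lt_or_gt with h | h
  · rw [min_eq_left h.le, max_eq_right h.le]
  · rw [min_eq_right h.le, max_eq_left h.le, add_comm]

lemma tau_zero_decomp (b : ℤ →₀ ℚ) (hb : memT b) (j : ℤ) (hj : b j ≠ 0) (hτ : tau b j = 0)
    (k₀ ℓ₀ : ℤ) (h1 : ∀ i, b i ≠ 0 → k₀ ≤ i)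
    (h2 : ∀ i i' : ℤ, b i ≠ 0 → b i' ≠ 0 → i < i' → ℓ₀ ≤ i') :
    ∃ (N : ℕ) (c : Fin N → ℚ) (k ℓ : Fin N → ℤ),
      (∀ m, 0 ≤ c m) ∧ (∀ m, k m < ℓ m) ∧
      (∀ m m' : Fin N, m ≤ m' → k m ≤ k m' ∧ ℓ m ≤ ℓ m') ∧
      b = ∑ m, c m • pureVec (k m) (ℓ m) ∧
      (∀ m, k₀ ≤ k m ∧ ℓ₀ ≤ ℓ m) := by
  classical
  have hjs : j ∈ b.support := Finsupp.mem_support_iff.2 hj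
  set s := b.support.erase j with hs
  set e := s.orderIsoOfFin rfl with he
  have hmem : ∀ m : Fin s.card, ((e m : ℤ)) ∈ s := fun m => (e m).2
  have hne : ∀ m : Fin s.card, ((e m : ℤ)) ≠ j := fun m => Finset.ne_of_mem_erase (hmem m)
  have hsupp : ∀ m : Fin s.card, b ((e m : ℤ)) ≠ 0 :=
    fun m => Finsupp.mem_support_iff.1 (Finset.mem_of_mem_erase (hmem m))
  have hmono : ∀ m m' : Fin s.card, m ≤ m' → ((e m : ℤ)) ≤ ((e m' : ℤ)) := by
    intro m m' h
    exact_mod_cast e.monotone h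
  refine ⟨s.card, fun m => b (e m), fun m => min (e m) j, fun m => max (e m) j,
    fun m => (hb _).1, fun m => min_lt_max.2 (hne m), ?_, ?_, ?_⟩
  · intro m m' h
    exact ⟨min_le_min (hmono m m' h) le_rfl, max_le_max (hmono m m' h) le_rfl⟩
  · symm
    show (∑ m : Fin s.card, b ((e m : ℤ)) • pureVec (min ((e m : ℤ)) j) (max ((e m : ℤ)) j)) = b
    have key : ∀ m : Fin s.card, b ((e m : ℤ)) • pureVec (min (e m) j) (max (e m) j)
        = Finsupp.single ((e m : ℤ)) (b (e m)) + Finsupp.single j (b (e m)) :=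
      fun m => pure_smul _ _ (hne m) _
    have hS : ∑ i ∈ b.support, b i = 2 * b j := by
      have := hτ
      rw [tau, sumAll_def] at this
      linarith
    have hsum : ∑ x ∈ s, b x = b j := by
      have := Finset.sum_erase_add b.support b hjs
      rw [hS] at this
      rw [← hs] at this
      linarith
    calc ∑ m : Fin s.card, b ((e m : ℤ)) • pureVec (min (e m) j) (max (e m) j)
        = ∑ m : Fin s.card, (Finsupp.single ((e m : ℤ)) (b (e m)) + Finsupp.single j (b (e m))) :=
          Finset.sum_congr rfl fun m _ => key m
      _ = (∑ m : Fin s.card, Finsupp.single ((e m : ℤ)) (b (e m)))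
          + ∑ m : Fin s.card, Finsupp.single j (b (e m)) := Finset.sum_add_distrib
      _ = (∑ x ∈ s, Finsupp.single x (b x)) + Finsupp.single j (∑ m : Fin s.card, b (e m)) := by
          rw [sum_fin_orderIso' s (fun x => Finsupp.single x (b x))]
          congr 1
          exact (map_sum (Finsupp.singleAddHom j) _ _).symm
      _ = (∑ x ∈ s, Finsupp.single x (b x)) + Finsupp.single j (b j) := by
          rw [sum_fin_orderIso s (fun x => b x), hsum]
      _ = ∑ x ∈ b.support, Finsupp.single x (b x) := by
          rw [← Finset.sum_erase_add b.support _ hjs]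
      _ = b := by
          conv_rhs => rw [← Finsupp.sum_single b]
          rfl
  · intro m
    dsimp only
    constructor
    · rcases le_total ((e m : ℤ)) j with h | h
      · rw [min_eq_left h]; exact h1 _ (hsupp m)
      · rw [min_eq_right h]; exact h1 _ hj
    · rcases (hne m).lt_or_gt with h | h
      · rw [max_eq_right h.le]; exact h2 _ _ (hsupp m) hj h
      · rw [max_eq_left h.le]; exact h2 _ _ hj (hsupp m) h


lemma zero_decomp (k₀ ℓ₀ : ℤ) :
    ∃ (N : ℕ) (c : Fin N → ℚ) (k ℓ : Fin N → ℤ),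
      (∀ m, 0 ≤ c m) ∧ (∀ m, k m < ℓ m) ∧
      (∀ m m' : Fin N, m ≤ m' → k m ≤ k m' ∧ ℓ m ≤ ℓ m') ∧
      (0 : ℤ →₀ ℚ) = ∑ m, c m • pureVec (k m) (ℓ m) ∧
      (∀ m, k₀ ≤ k m ∧ ℓ₀ ≤ ℓ m) :=
  ⟨0, fun m => 0, fun m => 0, fun m => 0, fun m => m.elim0, fun m => m.elim0,
    fun m => m.elim0, by simp, fun m => m.elim0⟩

lemma main_lemma : ∀ (n : ℕ) (b : ℤ →₀ ℚ), memT b → msr b ≤ n →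
    ∀ k₀ ℓ₀ : ℤ, (∀ i, b i ≠ 0 → k₀ ≤ i) →
    (∀ i i' : ℤ, b i ≠ 0 → b i' ≠ 0 → i < i' → ℓ₀ ≤ i') →
    ∃ (N : ℕ) (c : Fin N → ℚ) (k ℓ : Fin N → ℤ),
      (∀ m, 0 ≤ c m) ∧ (∀ m, k m < ℓ m) ∧
      (∀ m m' : Fin N, m ≤ m' → k m ≤ k m' ∧ ℓ m ≤ ℓ m') ∧
      b = ∑ m, c m • pureVec (k m) (ℓ m) ∧
      (∀ m, k₀ ≤ k m ∧ ℓ₀ ≤ ℓ m) := by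
  intro n
  induction n with
  | zero =>
    intro b hb hm k₀ ℓ₀ h1 h2
    have hcard : b.support.card = 0 := by
      have := hm
      unfold msr at this
      omega
    have hz : b = 0 := by
      rwa [Finset.card_eq_zero, Finsupp.support_eq_empty] at hcard
    subst hz
    exact zero_decomp k₀ ℓ₀
  | succ n IH =>
    intro b hb hm k₀ ℓ₀ h1 h2
    by_cases hz : b = 0
    · subst hz; exact zero_decomp k₀ ℓ₀
    by_cases hτ0 : ∃ j, b j ≠ 0 ∧ tau b j = 0
    · obtain ⟨j, hj, hjτ⟩ := hτ0
      exact tau_zero_decomp b hb j hj hjτ k₀ ℓ₀ h1 h2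
    -- Case 3: subtract c • pureVec k ℓ where k,ℓ are the two smallest support elements
    have hsne : b.support.Nonempty := Finsupp.support_nonempty_iff.2 hz
    set S := b.sum (fun _ v => v) with hS
    set k := b.support.min' hsne with hkdef
    have hk : k ∈ b.support := Finset.min'_mem _ _
    have hbk : b k ≠ 0 := Finsupp.mem_support_iff.1 hk
    have hbk0 : 0 < b k := (hb k).1.lt_of_ne (Ne.symm hbk)
    have hSk : 2 * b k ≤ S := by
      have := (hb k).2; rw [tau] at this; rw [hS]; linarith
    have h2card : (b.support.erase k).Nonempty := by
      rcases Finset.eq_singleton_or_nontrivial hk with h | h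
      · exfalso
        have hSbk : S = b k := by
          rw [hS, sumAll_def, h, Finset.sum_singleton]
        have := (hb k).2
        rw [tau, ← hS, hSbk] at this
        linarith
      · obtain ⟨x, hx, y, hy, hxy⟩ := h
        rcases eq_or_ne x k with rfl | hxk
        · exact ⟨y, Finset.mem_erase.2 ⟨hxy.symm, hy⟩⟩
        · exact ⟨x, Finset.mem_erase.2 ⟨hxk, hx⟩⟩
    set ℓ := (b.support.erase k).min' h2card with hℓdef
    have hℓe : ℓ ∈ b.support.erase k := Finset.min'_mem _ _
    have hℓ : ℓ ∈ b.support := Finset.mem_of_mem_erase hℓe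
    have hbℓ : b ℓ ≠ 0 := Finsupp.mem_support_iff.1 hℓ
    have hbℓ0 : 0 < b ℓ := (hb ℓ).1.lt_of_ne (Ne.symm hbℓ)
    have hkℓ : k < ℓ :=
      lt_of_le_of_ne (Finset.min'_le _ _ hℓ) (Ne.symm (Finset.ne_of_mem_erase hℓe))
    set t := (b.support.erase k).erase ℓ with htdef
    have htsub : ∀ i ∈ t, i ∈ b.support ∧ i ≠ k ∧ i ≠ ℓ := by
      intro i hi
      have h1' := Finset.mem_erase.1 hi
      have h2' := Finset.mem_erase.1 h1'.2
      exact ⟨h2'.2, h2'.1, h1'.1⟩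
    have htpos : ∀ i ∈ t, 0 < tau b i := by
      intro i hi
      obtain ⟨his, _, _⟩ := htsub i hi
      have hne : tau b i ≠ 0 := fun h => hτ0 ⟨i, Finsupp.mem_support_iff.1 his, h⟩
      exact (hb i).2.lt_of_ne (Ne.symm hne)
    set F : Finset ℚ := insert (b k) (insert (b ℓ) (t.image fun i => tau b i / 2)) with hFdef
    have hFne : F.Nonempty := ⟨b k, Finset.mem_insert_self _ _⟩
    set c := F.min' hFne with hcdef
    have hck : c ≤ b k := Finset.min'_le _ _ (Finset.mem_insert_self _ _)
    have hcℓ : c ≤ b ℓ :=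
      Finset.min'_le _ _ (Finset.mem_insert_of_mem (Finset.mem_insert_self _ _))
    have hct : ∀ i ∈ t, c ≤ tau b i / 2 := fun i hi =>
      Finset.min'_le _ _ (Finset.mem_insert_of_mem (Finset.mem_insert_of_mem
        (Finset.mem_image_of_mem _ hi)))
    have hc0 : 0 < c := by
      have hcF : c ∈ F := Finset.min'_mem _ _
      rw [hFdef] at hcF
      rcases Finset.mem_insert.1 hcF with h | h
      · rw [h]; exact hbk0
      rcases Finset.mem_insert.1 h with h | h
      · rw [h]; exact hbℓ0
      obtain ⟨i, hi, hci⟩ := Finset.mem_image.1 h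
      have := htpos i hi
      rw [← hci]
      linarith
    -- facts about pureVec k ℓ
    have hpk : pureVec k ℓ k = 1 := by
      rw [pureVec, Finsupp.add_apply, Finsupp.single_apply, Finsupp.single_apply]
      rw [if_pos rfl, if_neg hkℓ.ne']; norm_num
    have hpℓ : pureVec k ℓ ℓ = 1 := by
      rw [pureVec, Finsupp.add_apply, Finsupp.single_apply, Finsupp.single_apply]
      rw [if_pos rfl, if_neg hkℓ.ne]; norm_num
    have hpo : ∀ i, i ≠ k → i ≠ ℓ → pureVec k ℓ i = 0 := by
      intro i h1' h2'
      rw [pureVec, Finsupp.add_apply, Finsupp.single_apply, Finsupp.single_apply]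
      rw [if_neg (Ne.symm h1'), if_neg (Ne.symm h2')]; norm_num
    set b' := b - c • pureVec k ℓ with hb'def
    have hb'app : ∀ i, b' i = b i - c * pureVec k ℓ i := by
      intro i; rw [hb'def, Finsupp.sub_apply, Finsupp.smul_apply, smul_eq_mul]
    have hb'k : b' k = b k - c := by rw [hb'app, hpk, mul_one]
    have hb'ℓ : b' ℓ = b ℓ - c := by rw [hb'app, hpℓ, mul_one]
    have hb'o : ∀ i, i ≠ k → i ≠ ℓ → b' i = b i := by
      intro i h1' h2'; rw [hb'app, hpo i h1' h2', mul_zero, sub_zero]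
    have hS' : (b'.sum fun _ v => v) = S - 2 * c := by
      rw [hb'def, sumAll_sub, sumAll_smul_pure, hS]
    have hb'le : ∀ i, b' i ≤ b i := by
      intro i
      rw [hb'app]
      have := pure_nonneg k ℓ i
      nlinarith [hc0.le]
    have hb'T : memT b' := by
      intro i
      constructor
      · rcases eq_or_ne i k with rfl | hik
        · rw [hb'k]; linarith
        rcases eq_or_ne i ℓ with rfl | hiℓ
        · rw [hb'ℓ]; linarith
        · rw [hb'o i hik hiℓ]; exact (hb i).1
      · rw [tau, hS']
        rcases eq_or_ne i k with rfl | hik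
        · rw [hb'k]
          have := (hb k).2; rw [tau, ← hS] at this; linarith
        rcases eq_or_ne i ℓ with rfl | hiℓ
        · rw [hb'ℓ]
          have := (hb ℓ).2; rw [tau, ← hS] at this; linarith
        rw [hb'o i hik hiℓ]
        by_cases hit : i ∈ t
        · have h3 : tau b i = S - 2 * b i := by rw [tau, ← hS]
          have := hct i hit
          linarith
        · have hi0 : b i = 0 := by
            by_contra hne
            have : i ∈ b.support := Finsupp.mem_support_iff.2 hne
            exact hit (Finset.mem_erase.2 ⟨hiℓ, Finset.mem_erase.2 ⟨hik, this⟩⟩)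
          rw [hi0]
          linarith
    have hsubsupp : b'.support ⊆ b.support := by
      intro i hi
      have h0 := Finsupp.mem_support_iff.1 hi
      rw [Finsupp.mem_support_iff]
      intro h
      have h4 := (hb'T i).1
      have h5 := hb'le i
      rw [h] at h5
      exact h0 (le_antisymm h5 h4)
    have hmsr : msr b' ≤ n := by
      have hmb : b.support.card + 1 ≤ n + 1 := by
        have : msr b = b.support.card + 1 := by rw [msr, if_neg hτ0]
        omega
      have hcF : c ∈ F := Finset.min'_mem _ _
      rw [hFdef] at hcF
      have hbound : msr b' ≤ b'.support.card + 1 := by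
        rw [msr]; split <;> omega
      rcases Finset.mem_insert.1 hcF with h | h
      · -- c = b k : k leaves the support
        have hk' : k ∉ b'.support := by
          rw [Finsupp.mem_support_iff]; push_neg
          rw [hb'k, ← h]; ring
        have hss : b'.support ⊂ b.support := ⟨hsubsupp, fun hsub => hk' (hsub hk)⟩
        have := Finset.card_lt_card hss
        omega
      rcases Finset.mem_insert.1 h with h | h
      · have hℓ' : ℓ ∉ b'.support := by
          rw [Finsupp.mem_support_iff]; push_neg
          rw [hb'ℓ, ← h]; ring
        have hss : b'.support ⊂ b.support := ⟨hsubsupp, fun hsub => hℓ' (hsub hℓ)⟩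
        have := Finset.card_lt_card hss
        omega
      · -- c = tau b i / 2 : b' has a tau-zero witness
        obtain ⟨i, hi, hci⟩ := Finset.mem_image.1 h
        obtain ⟨his, hik, hiℓ⟩ := htsub i hi
        have hwit : ∃ j, b' j ≠ 0 ∧ tau b' j = 0 := by
          refine ⟨i, ?_, ?_⟩
          · rw [hb'o i hik hiℓ]; exact Finsupp.mem_support_iff.1 his
          · rw [tau, hS', hb'o i hik hiℓ, ← hci]
            have : tau b i = S - 2 * b i := by rw [tau, ← hS]
            rw [this]; ring
        have hmeq : msr b' = b'.support.card := by rw [msr, if_pos hwit]; omega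
        have := Finset.card_le_card hsubsupp
        omega
    -- recursive call
    have h1' : ∀ i, b' i ≠ 0 → k ≤ i := by
      intro i hi
      have : i ∈ b.support := hsubsupp (Finsupp.mem_support_iff.2 hi)
      exact Finset.min'_le _ _ this
    have h2' : ∀ i i' : ℤ, b' i ≠ 0 → b' i' ≠ 0 → i < i' → ℓ ≤ i' := by
      intro i i' hi hi' hlt
      have hi's : i' ∈ b.support := hsubsupp (Finsupp.mem_support_iff.2 hi')
      have : i' ≠ k := by
        have := h1' i hi
        omega
      exact Finset.min'_le _ _ (Finset.mem_erase.2 ⟨this, hi's⟩)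
    obtain ⟨N, c', k', ℓ', hc', hlt', hch', hsum', hbd'⟩ := IH b' hb'T hmsr k ℓ h1' h2'
    refine ⟨N + 1, Fin.cons c c', Fin.cons k k', Fin.cons ℓ ℓ', ?_, ?_, ?_, ?_, ?_⟩
    · intro m
      rcases Fin.eq_zero_or_eq_succ m with rfl | ⟨i, rfl⟩
      · simp only [Fin.cons_zero]; exact hc0.le
      · simp only [Fin.cons_succ]; exact hc' i
    · intro m
      rcases Fin.eq_zero_or_eq_succ m with rfl | ⟨i, rfl⟩
      · simp only [Fin.cons_zero]; exact hkℓ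
      · simp only [Fin.cons_succ]; exact hlt' i
    · intro m m' hmm
      rcases Fin.eq_zero_or_eq_succ m with rfl | ⟨i, rfl⟩
      · rcases Fin.eq_zero_or_eq_succ m' with rfl | ⟨i', rfl⟩
        · exact ⟨le_rfl, le_rfl⟩
        · simp only [Fin.cons_zero, Fin.cons_succ]
          exact hbd' i'
      · rcases Fin.eq_zero_or_eq_succ m' with rfl | ⟨i', rfl⟩
        · exact absurd (Fin.le_zero_iff.1 hmm) (Fin.succ_ne_zero i)
        · simp only [Fin.cons_succ]
          exact hch' i i' (Fin.succ_le_succ_iff.1 hmm)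
    · symm
      rw [Fin.sum_univ_succ]
      simp only [Fin.cons_zero, Fin.cons_succ]
      rw [← hsum', hb'def]
      abel
    · intro m
      rcases Fin.eq_zero_or_eq_succ m with rfl | ⟨i, rfl⟩
      · simp only [Fin.cons_zero]
        exact ⟨h1 k hbk, h2 k ℓ hbk hbℓ hkℓ⟩
      · simp only [Fin.cons_succ]
        exact ⟨le_trans (h1 k hbk) (hbd' i).1, le_trans (h2 k ℓ hbk hbℓ hkℓ) (hbd' i).2⟩

/-- Every `b ∈ T` is a finite nonnegative rational combination of pure vectors
`e_{k_m, ℓ_m}` whose degree sequences `(k_m, ℓ_m)` form a chain in the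
componentwise partial order. -/
theorem T_subset_pure_cone_chain (b : ℤ →₀ ℚ) (hb : memT b) :
    ∃ (N : ℕ) (c : Fin N → ℚ) (k ℓ : Fin N → ℤ),
      (∀ m, 0 ≤ c m) ∧ (∀ m, k m < ℓ m) ∧
      (∀ m m' : Fin N, m ≤ m' → k m ≤ k m' ∧ ℓ m ≤ ℓ m') ∧
      b = ∑ m, c m • pureVec (k m) (ℓ m) := by
  by_cases hz : b = 0
  · subst hz
    obtain ⟨N, c, k, l, h1, h2, h3, h4, _⟩ := zero_decomp 0 0
    exact ⟨N, c, k, l, h1, h2, h3, h4⟩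
  · have hsne : b.support.Nonempty := Finsupp.support_nonempty_iff.2 hz
    obtain ⟨N, c, k, l, h1', h2', h3', h4', _⟩ := main_lemma (msr b) b hb le_rfl
      (b.support.min' hsne) (b.support.min' hsne)
      (fun i hi => Finset.min'_le _ _ (Finsupp.mem_support_iff.2 hi))
      (fun i i' hi hi' _ => Finset.min'_le _ _ (Finsupp.mem_support_iff.2 hi'))
    exact ⟨N, c, k, l, h1', h2', h3', h4'⟩
end

section
/- Suppose b ∈ T and τ_j(b) = 0 for some j ∈ ℤ. Then b = Σ_{i ≠ j} b(i) · e_{{i,j}}, where for i ≠ j the symbol e_{{i,j}} denotes the pure vector e_{min(i,j),max(i,j)}; the sum is finite since b is finitely supported. In particular b is a nonnegative rational combination of pure vectors. -/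
/-- `pureVec` of `min i j` and `max i j` is symmetric in `i, j`. -/
lemma pureVec_comm_s3 (i j : ℤ) :
    pureVec (min i j) (max i j) = Finsupp.single i 1 + Finsupp.single j 1 := by
  rcases le_total i j with h | h
  · simp [pureVec, min_eq_left h, max_eq_right h]
  · simp [pureVec, min_eq_right h, max_eq_left h, add_comm]

/-- If `b ∈ T` and `τ_j(b) = 0` for some `j`, then
`b = Σ_{i ≠ j} b(i) · e_{{i,j}}`, where `e_{{i,j}} = e_{min(i,j), max(i,j)}`;
the sum runs over the (finite) support of `b` with `j` removed. -/
theorem phaseII_decomposition (b : ℤ →₀ ℚ) (hb : memT b) (j : ℤ) (hj : tau b j = 0) :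
    b = ∑ i ∈ b.support.erase j, b i • pureVec (min i j) (max i j) := by
  have hsum : (∑ i ∈ b.support, b i) = 2 * b j := by
    have := hj
    unfold tau at this
    rw [Finsupp.sum] at this
    linarith
  have herase : (∑ i ∈ b.support.erase j, b i) = b j := by
    by_cases hjs : j ∈ b.support
    · have := Finset.sum_erase_add b.support (fun i => b i) hjs
      linarith
    · have hbj : b j = 0 := Finsupp.notMem_support_iff.mp hjs
      rw [Finset.erase_eq_of_notMem hjs, hsum, hbj]; ring
  ext k
  rw [Finsupp.finset_sum_apply]
  by_cases hk : k = j
  · subst hk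
    have : ∀ i ∈ b.support.erase k, (b i • pureVec (min i k) (max i k)) k = b i := by
      intro i hi
      have hik : i ≠ k := Finset.ne_of_mem_erase hi
      rw [pureVec_comm_s3]
      simp [Finsupp.single_apply, hik]
    rw [Finset.sum_congr rfl this, herase]
  · have : ∀ i ∈ b.support.erase j, (b i • pureVec (min i j) (max i j)) k
        = if i = k then b k else 0 := by
      intro i hi
      rw [pureVec_comm_s3]
      simp [Finsupp.single_apply, Ne.symm hk]
      split_ifs with h
      · rw [h]
      · rfl
    rw [Finset.sum_congr rfl this, Finset.sum_ite_eq' (b.support.erase j) k fun _ => b k]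
    by_cases hks : k ∈ b.support
    · simp [Finset.mem_erase, hk, hks]
    · have : b k = 0 := Finsupp.notMem_support_iff.mp hks
      simp [Finset.mem_erase, hks, this]
end

section
/- Let b ∈ T whose support has at least two elements, let k < ℓ be the two smallest elements of the support of b, let j ∈ ℤ be an index at which τ_j(b) is minimal (equivalently, b(j) ≥ b(i) for all i ∈ ℤ), set c = min{b(k), b(ℓ), τ_j(b)/2}, and let b′ = b − c·e_{k,ℓ}. Then τ_i(b′) ≥ 0 for all i ∈ ℤ. -/
lemma sum_sub' (b g : ℤ →₀ ℚ) :
    ((b - g).sum fun _ v => v) = (b.sum fun _ v => v) - (g.sum fun _ v => v) := by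
  apply Finsupp.sum_sub_index
  intro a b1 b2; rfl

lemma sum_smul' (c : ℚ) (g : ℤ →₀ ℚ) :
    ((c • g).sum fun _ v => v) = c * (g.sum fun _ v => v) := by
  rw [Finsupp.sum_smul_index (fun i => rfl), Finsupp.mul_sum]

lemma sum_pureVec {k ℓ : ℤ} (h : k ≠ ℓ) :
    ((pureVec k ℓ).sum fun _ v => v) = 2 := by
  rw [pureVec, Finsupp.sum_add_index (by simp) (by intros; rfl),
    Finsupp.sum_single_index rfl, Finsupp.sum_single_index rfl]
  norm_num

lemma tau_sub (b : ℤ →₀ ℚ) (c : ℚ) {k ℓ : ℤ} (h : k ≠ ℓ) (i : ℤ) :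
    tau (b - c • pureVec k ℓ) i = tau b i - 2 * c + 2 * c * (pureVec k ℓ i) := by
  simp only [tau, sum_sub', sum_smul', sum_pureVec h, Finsupp.sub_apply,
    Finsupp.smul_apply, smul_eq_mul]
  ring

/-- One step of Phase I preserves nonnegativity of the `τ` functionals:
if `b ∈ T` has at least two elements in its support, `k < ℓ` are the two smallest
elements of the support, `τ_j(b)` is minimal at `j`, and
`c = min {b(k), b(ℓ), τ_j(b)/2}`, then `τ_i(b − c·e_{k,ℓ}) ≥ 0` for all `i`. -/
theorem phaseI_step_tau_nonneg (b : ℤ →₀ ℚ) (hb : memT b) (k ℓ j : ℤ)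
    (hk : k ∈ b.support) (hl : ℓ ∈ b.support) (hkl : k < ℓ)
    (hkmin : ∀ i ∈ b.support, k ≤ i)
    (hlmin : ∀ i ∈ b.support, i ≠ k → ℓ ≤ i)
    (hj : ∀ i : ℤ, tau b j ≤ tau b i)
    (c : ℚ) (hc : c = min (b k) (min (b ℓ) (tau b j / 2))) :
    ∀ i : ℤ, 0 ≤ tau (b - c • pureVec k ℓ) i := by
  intro i
  have hne : k ≠ ℓ := ne_of_lt hkl
  rw [tau_sub b c hne i]
  by_cases hik : i = k
  · subst hik
    have : pureVec i ℓ i = 1 := by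
      simp [pureVec, Finsupp.single_apply, hne, hne.symm]
    rw [this]
    have := (hb i).2
    linarith
  · by_cases hil : i = ℓ
    · subst hil
      have : pureVec k i i = 1 := by
        simp [pureVec, Finsupp.single_apply, hne, hne.symm]
      rw [this]
      have := (hb i).2
      linarith
    · have : pureVec k ℓ i = 0 := by
        simp [pureVec, Finsupp.single_apply, Ne.symm hik, Ne.symm hil]
      rw [this]
      have h1 : tau b j ≤ tau b i := hj i
      have h2 : c ≤ tau b j / 2 := hc ▸ le_trans (min_le_right _ _) (min_le_right _ _)
      linarith
end

section
/- Let b ∈ T whose support has at least two elements, let k < ℓ be the two smallest elements of the support of b, let j ∈ ℤ be an index at which τ_j(b) is minimal (equivalently, b(j) ≥ b(i) for all i ∈ ℤ), set c = min{b(k), b(ℓ), τ_j(b)/2}, and let b′ = b − c·e_{k,ℓ}. Then σ_i(b′) = b′(i) ≥ 0 for all i ∈ ℤ. -/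
/-- One step of Phase I preserves nonnegativity of the `σ` functionals (the values):
if `b ∈ T` has at least two elements in its support, `k < ℓ` are the two smallest
elements of the support, `τ_j(b)` is minimal at `j`, and
`c = min {b(k), b(ℓ), τ_j(b)/2}`, then `σ_i(b − c·e_{k,ℓ}) = (b − c·e_{k,ℓ})(i) ≥ 0`
for all `i`. -/
theorem phaseI_step_sigma_nonneg (b : ℤ →₀ ℚ) (hb : memT b) (k ℓ j : ℤ)
    (hk : k ∈ b.support) (hl : ℓ ∈ b.support) (hkl : k < ℓ)
    (hkmin : ∀ i ∈ b.support, k ≤ i)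
    (hlmin : ∀ i ∈ b.support, i ≠ k → ℓ ≤ i)
    (hj : ∀ i : ℤ, tau b j ≤ tau b i)
    (c : ℚ) (hc : c = min (b k) (min (b ℓ) (tau b j / 2))) :
    ∀ i : ℤ, 0 ≤ (b - c • pureVec k ℓ) i := by
  intro i
  have hc0 : 0 ≤ c := by
    rw [hc]
    exact le_min (hb k).1 (le_min (hb ℓ).1 (by linarith [(hb j).2]))
  have hck : c ≤ b k := hc ▸ min_le_left _ _
  have hcl : c ≤ b ℓ := hc ▸ le_trans (min_le_right _ _) (min_le_left _ _)
  have hne : k ≠ ℓ := ne_of_lt hkl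
  simp only [Finsupp.sub_apply, Finsupp.smul_apply, pureVec, Finsupp.add_apply,
    Finsupp.single_apply, smul_eq_mul]
  rcases eq_or_ne k i with rfl | hki
  · simp [Ne.symm hne]; linarith
  · rcases eq_or_ne ℓ i with rfl | hli
    · simp [hki]; linarith
    · simp [hki, hli]; exact (hb i).1
end

section
/- (Termination of Phase I.) Let b ∈ T with b ≠ 0, all values of b integers, and Σ_{i∈ℤ} b(i) even. Then there exist N ∈ ℕ and a sequence b = b^0, b^1, …, b^N of elements of T such that for each m < N: the support of b^m has at least two elements, b^{m+1} = b^m − c_m·e_{k_m,ℓ_m} where k_m < ℓ_m are the two smallest elements of the support of b^m, c_m = min{b^m(k_m), b^m(ℓ_m), τ_{j_m}(b^m)/2} for some index j_m at which τ_{j_m}(b^m) is minimal; and either b^N = 0 or τ_j(b^N) = 0 for some j ∈ ℤ. -/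
noncomputable def S : (ℤ →₀ ℚ) →ₗ[ℚ] ℚ := Finsupp.lsum ℚ fun _ => LinearMap.id

lemma S_eq (b : ℤ →₀ ℚ) : S b = b.sum fun _ v => v := rfl

lemma S_single (k : ℤ) (q : ℚ) : S (Finsupp.single k q) = q := by
  rw [S_eq, Finsupp.sum_single_index]; rfl

lemma S_pureVec (k ℓ : ℤ) : S (pureVec k ℓ) = 2 := by
  rw [pureVec, map_add, S_single, S_single]; norm_num

lemma pureVec_apply (k ℓ i : ℤ) :
    pureVec k ℓ i = (if k = i then 1 else 0) + (if ℓ = i then 1 else 0) := by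
  rw [pureVec, Finsupp.add_apply, Finsupp.single_apply, Finsupp.single_apply]

lemma tau_S (b : ℤ →₀ ℚ) (j : ℤ) : tau b j = S b - 2 * b j := rfl

lemma S_nonneg (b : ℤ →₀ ℚ) (h : ∀ i, 0 ≤ b i) : 0 ≤ S b := by
  rw [S_eq, Finsupp.sum]
  exact Finset.sum_nonneg fun i _ => h i

lemma step (b : ℤ →₀ ℚ) (hb : memT b) (hne : b ≠ 0) (hτ : ∀ j, tau b j ≠ 0)
    (hint : ∀ i : ℤ, ∃ m : ℤ, b i = (m : ℚ)) (n : ℤ) (hn : S b = 2 * (n : ℚ)) :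
    ∃ k ℓ j : ℤ,
      k ∈ b.support ∧ ℓ ∈ b.support ∧ k < ℓ ∧
      (∀ i ∈ b.support, k ≤ i) ∧
      (∀ i ∈ b.support, i ≠ k → ℓ ≤ i) ∧
      (∀ i : ℤ, tau b j ≤ tau b i) ∧
      memT (b - (min (b k) (min (b ℓ) (tau b j / 2))) • pureVec k ℓ) ∧
      (∀ i : ℤ, ∃ m : ℤ,
        (b - (min (b k) (min (b ℓ) (tau b j / 2))) • pureVec k ℓ) i = (m : ℚ)) ∧
      ∃ n' : ℤ,
        S (b - (min (b k) (min (b ℓ) (tau b j / 2))) • pureVec k ℓ) = 2 * (n' : ℚ) ∧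
        0 ≤ n' ∧ n' < n := by
  have hsupp : b.support.Nonempty := Finsupp.support_nonempty_iff.mpr hne
  set k := b.support.min' hsupp with hkdef
  have hkmem : k ∈ b.support := b.support.min'_mem hsupp
  have hkle : ∀ i ∈ b.support, k ≤ i := fun i hi => b.support.min'_le i hi
  have hbkpos : 0 < b k :=
    lt_of_le_of_ne (hb k).1 (Ne.symm (Finsupp.mem_support_iff.mp hkmem))
  have herase : (b.support.erase k).Nonempty := by
    by_contra h
    rw [Finset.not_nonempty_iff_eq_empty] at h
    have hsingle : b.support = {k} := by
      apply Finset.eq_singleton_iff_unique_mem.mpr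
      refine ⟨hkmem, fun i hi => ?_⟩
      by_contra hik
      have : i ∈ b.support.erase k := Finset.mem_erase.mpr ⟨hik, hi⟩
      rw [h] at this; exact absurd this (Finset.notMem_empty i)
    have hsum : S b = b k := by
      rw [S_eq, Finsupp.sum, hsingle, Finset.sum_singleton]
    have h1 := (hb k).2
    rw [tau_S, hsum] at h1
    linarith
  set ℓ := (b.support.erase k).min' herase with hldef
  have hlmem' : ℓ ∈ b.support.erase k := (b.support.erase k).min'_mem herase
  have hlmem : ℓ ∈ b.support := (Finset.mem_erase.mp hlmem').2
  have hlk : ℓ ≠ k := (Finset.mem_erase.mp hlmem').1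
  have hkl : k < ℓ := lt_of_le_of_ne (hkle ℓ hlmem) (Ne.symm hlk)
  have hblpos : 0 < b ℓ :=
    lt_of_le_of_ne (hb ℓ).1 (Ne.symm (Finsupp.mem_support_iff.mp hlmem))
  have hlle : ∀ i ∈ b.support, i ≠ k → ℓ ≤ i := fun i hi hik =>
    Finset.min'_le _ i (Finset.mem_erase.mpr ⟨hik, hi⟩)
  obtain ⟨j, hjmem, hjmax⟩ := b.support.exists_max_image (fun i => b i) hsupp
  have hjall : ∀ i, b i ≤ b j := by
    intro i
    by_cases hi : i ∈ b.support
    · exact hjmax i hi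
    · rw [Finsupp.notMem_support_iff.mp hi]; exact (hb j).1
  have hτmin : ∀ i, tau b j ≤ tau b i := by
    intro i; rw [tau_S, tau_S]; have := hjall i; linarith
  have hτjpos : 0 < tau b j := lt_of_le_of_ne (hb j).2 (Ne.symm (hτ j))
  set c := min (b k) (min (b ℓ) (tau b j / 2)) with hcdef
  set b' := b - c • pureVec k ℓ with hb'def
  have hc1 : c ≤ b k := min_le_left _ _
  have hc2 : c ≤ b ℓ := le_trans (min_le_right _ _) (min_le_left _ _)
  have hc3 : c ≤ tau b j / 2 := le_trans (min_le_right _ _) (min_le_right _ _)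
  have hval : ∀ i, b' i = b i - c * ((if k = i then 1 else 0) + (if ℓ = i then 1 else 0)) := by
    intro i
    rw [hb'def, Finsupp.sub_apply, Finsupp.smul_apply, pureVec_apply, smul_eq_mul]
  have hbk' : b' k = b k - c := by
    rw [hval k, if_pos rfl, if_neg hlk]; ring
  have hbl' : b' ℓ = b ℓ - c := by
    rw [hval ℓ, if_pos rfl, if_neg (ne_of_lt hkl)]; ring
  have hother : ∀ i, i ≠ k → i ≠ ℓ → b' i = b i := by
    intro i hik hil
    rw [hval i, if_neg (fun h => hik h.symm), if_neg (fun h => hil h.symm)]; ring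
  have hSb' : S b' = S b - 2 * c := by
    rw [hb'def, map_sub, map_smul, S_pureVec, smul_eq_mul]; ring
  have htau' : ∀ i, tau b' i = (S b - 2 * c) - 2 * b' i := by
    intro i; rw [tau_S, hSb']
  have hmemT' : memT b' := by
    intro i
    have h2 : tau b j = S b - 2 * b j := tau_S b j
    constructor
    · by_cases hik : i = k
      · rw [hik, hbk']; linarith
      · by_cases hil : i = ℓ
        · rw [hil, hbl']; linarith
        · rw [hother i hik hil]; exact (hb i).1
    · by_cases hik : i = k
      · rw [hik, htau' k, hbk']
        have := (hb k).2; rw [tau_S] at this; linarith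
      · by_cases hil : i = ℓ
        · rw [hil, htau' ℓ, hbl']
          have := (hb ℓ).2; rw [tau_S] at this; linarith
        · rw [htau' i, hother i hik hil]
          have h1 := hτmin i
          rw [tau_S, tau_S] at h1
          linarith
  obtain ⟨mk, hmk⟩ := hint k
  obtain ⟨ml, hml⟩ := hint ℓ
  obtain ⟨mj, hmj⟩ := hint j
  have htauj : tau b j / 2 = ((n - mj : ℤ) : ℚ) := by
    rw [tau_S, hn, hmj]; push_cast; ring
  set cz := min mk (min ml (n - mj)) with hczdef
  have hcz : c = (cz : ℚ) := by
    rw [hcdef, hmk, hml, htauj, hczdef]; push_cast; ring_nf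
  have hmk1 : 1 ≤ mk := by
    have h0 : (0 : ℚ) < (mk : ℚ) := by rw [← hmk]; exact hbkpos
    have : (0 : ℤ) < mk := by exact_mod_cast h0
    omega
  have hml1 : 1 ≤ ml := by
    have h0 : (0 : ℚ) < (ml : ℚ) := by rw [← hml]; exact hblpos
    have : (0 : ℤ) < ml := by exact_mod_cast h0
    omega
  have hnmj1 : 1 ≤ n - mj := by
    have h0 : (0 : ℚ) < ((n - mj : ℤ) : ℚ) := by rw [← htauj]; linarith
    have : (0 : ℤ) < n - mj := by exact_mod_cast h0
    omega
  have hcz1 : 1 ≤ cz := le_min hmk1 (le_min hml1 hnmj1)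
  have hint' : ∀ i : ℤ, ∃ m : ℤ, b' i = (m : ℚ) := by
    intro i
    by_cases hik : i = k
    · exact ⟨mk - cz, by rw [hik, hbk', hmk, hcz]; push_cast; ring⟩
    · by_cases hil : i = ℓ
      · exact ⟨ml - cz, by rw [hil, hbl', hml, hcz]; push_cast; ring⟩
      · obtain ⟨m, hm⟩ := hint i
        exact ⟨m, by rw [hother i hik hil]; exact hm⟩
  have hSn' : S b' = 2 * ((n - cz : ℤ) : ℚ) := by
    rw [hSb', hn, hcz]; push_cast; ring
  have hn'0 : 0 ≤ n - cz := by
    have h0 : 0 ≤ S b' := S_nonneg b' fun i => (hmemT' i).1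
    rw [hSn'] at h0
    have : (0 : ℚ) ≤ ((n - cz : ℤ) : ℚ) := by linarith
    exact_mod_cast this
  exact ⟨k, ℓ, j, hkmem, hlmem, hkl, hkle, hlle, hτmin, hmemT', hint',
    n - cz, hSn', hn'0, by omega⟩

lemma aux : ∀ n : ℕ, ∀ b : ℤ →₀ ℚ, memT b → (∀ i : ℤ, ∃ m : ℤ, b i = (m : ℚ)) →
    S b = 2 * ((n : ℤ) : ℚ) →
    ∃ (N : ℕ) (s : ℕ → (ℤ →₀ ℚ)),
      s 0 = b ∧
      (∀ m ≤ N, memT (s m)) ∧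
      (∀ m < N, ∃ k ℓ j : ℤ,
        k ∈ (s m).support ∧ ℓ ∈ (s m).support ∧ k < ℓ ∧
        (∀ i ∈ (s m).support, k ≤ i) ∧
        (∀ i ∈ (s m).support, i ≠ k → ℓ ≤ i) ∧
        (∀ i : ℤ, tau (s m) j ≤ tau (s m) i) ∧
        s (m + 1) =
          s m - (min ((s m) k) (min ((s m) ℓ) (tau (s m) j / 2))) • pureVec k ℓ) ∧
      (s N = 0 ∨ ∃ j : ℤ, tau (s N) j = 0) := by
  intro n
  induction n using Nat.strong_induction_on with
  | _ n IH =>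
    intro b hb hint hn
    by_cases h0 : b = 0 ∨ ∃ j : ℤ, tau b j = 0
    · refine ⟨0, fun _ => b, rfl, fun m _ => hb, fun m hm => absurd hm (Nat.not_lt_zero m), h0⟩
    · push_neg at h0
      obtain ⟨hne, hτ⟩ := h0
      obtain ⟨k, ℓ, j, hkmem, hlmem, hkl, hkle, hlle, hτmin, hmemT', hint', n', hSn', hn'0, hn'lt⟩ :=
        step b hb hne hτ hint n hn
      set b' := b - (min (b k) (min (b ℓ) (tau b j / 2))) • pureVec k ℓ with hb'def
      have hn'' : ((n'.toNat : ℤ) : ℚ) = (n' : ℚ) := by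
        rw [Int.toNat_of_nonneg hn'0]
      have hlt : n'.toNat < n := by omega
      obtain ⟨N, s, hs0, hmem, hstep, hfin⟩ :=
        IH n'.toNat hlt b' hmemT' hint' (by rw [hSn', hn''])
      refine ⟨N + 1, fun m => if m = 0 then b else s (m - 1), rfl, ?_, ?_, ?_⟩
      · intro m hm
        cases m with
        | zero => exact hb
        | succ m => exact hmem m (by omega)
      · intro m hm
        cases m with
        | zero => exact ⟨k, ℓ, j, hkmem, hlmem, hkl, hkle, hlle, hτmin, hs0⟩
        | succ m =>
          obtain ⟨k', ℓ', j', h1, h2, h3, h4, h5, h6, h7⟩ := hstep m (by omega)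
          exact ⟨k', ℓ', j', h1, h2, h3, h4, h5, h6, h7⟩
      · exact hfin

/-- Termination of Phase I: starting from a nonzero `b ∈ T` with integer values and
even total sum, finitely many Phase I steps (each subtracting
`c_m · e_{k_m, ℓ_m}` where `k_m < ℓ_m` are the two smallest support elements and
`c_m = min {b^m(k_m), b^m(ℓ_m), τ_{j_m}(b^m)/2}` for a minimizing index `j_m`)
reach a vector that is `0` or on which some `τ_j` vanishes. -/
theorem phaseI_terminates (b : ℤ →₀ ℚ) (hb : memT b) (hne : b ≠ 0)
    (hint : ∀ i : ℤ, ∃ n : ℤ, b i = (n : ℚ))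
    (heven : ∃ n : ℤ, (b.sum fun _ v => v) = 2 * (n : ℚ)) :
    ∃ (N : ℕ) (s : ℕ → (ℤ →₀ ℚ)),
      s 0 = b ∧
      (∀ m ≤ N, memT (s m)) ∧
      (∀ m < N, ∃ k ℓ j : ℤ,
        k ∈ (s m).support ∧ ℓ ∈ (s m).support ∧ k < ℓ ∧
        (∀ i ∈ (s m).support, k ≤ i) ∧
        (∀ i ∈ (s m).support, i ≠ k → ℓ ≤ i) ∧
        (∀ i : ℤ, tau (s m) j ≤ tau (s m) i) ∧
        s (m + 1) =
          s m - (min ((s m) k) (min ((s m) ℓ) (tau (s m) j / 2))) • pureVec k ℓ) ∧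
      (s N = 0 ∨ ∃ j : ℤ, tau (s N) j = 0) := by
  obtain ⟨n, hn⟩ := heven
  have hnS : S b = 2 * (n : ℚ) := by rw [S_eq]; exact hn
  have hn0 : 0 ≤ n := by
    have h0 : 0 ≤ S b := S_nonneg b fun i => (hb i).1
    rw [hnS] at h0
    have : (0 : ℚ) ≤ (n : ℚ) := by linarith
    exact_mod_cast this
  exact aux n.toNat b hb hint (by rw [hnS, Int.toNat_of_nonneg hn0])
end
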